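/- Let N ≥ 0 and let (H_k) be a sequence of positive definite Hermitian (N+1)×(N+1) complex matrices whose underlying set is bounded, with constants γ_k = γ_{H_k}. Then there is a subsequence (H_{n_k}) such that the normalized sequence γ_{n_k}^{-1}·H_{n_k} converges (entrywise) to a positive definite Hermitian matrix. -/

import Mathlib

/-!
Dividing by `γ_k` puts every matrix into the Loewner interval `[R⁻¹, R]`. In a
finite-dimensional C⋆-algebra such an interval is closed, and bounded because `0 ≤ a ≤ b`
forces `‖a‖ ≤ ‖b‖`; so it is compact and a subsequence converges. The limit still dominates
`R⁻¹ > 0`, hence is strictly positive, i.e. positive definite.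
-/

open scoped ComplexOrder

section

open Set Filter Topology

theorem smul_mem_Icc_algebraMap {R A : Type*} [CommSemiring R] [PartialOrder R] [Semiring A]
    [PartialOrder A] [Algebra R A] [PosSMulMono R A] {a : A} {r s c : R} (hc : 0 ≤ c)
    (ha : a ∈ Icc (algebraMap R A r) (algebraMap R A s)) :
    c • a ∈ Icc (algebraMap R A (c * r)) (algebraMap R A (c * s)) := by
  simp only [map_mul, ← Algebra.smul_def]
  exact ⟨smul_le_smul_of_nonneg_left ha.1 hc, smul_le_smul_of_nonneg_left ha.2 hc⟩

namespace CStarAlgebra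

variable {A : Type*} [CStarAlgebra A] [PartialOrder A] [StarOrderedRing A]

theorem Icc_subset_closedBall (a b : A) : Icc a b ⊆ Metric.closedBall a ‖b - a‖ := fun x hx => by
  rw [Metric.mem_closedBall, dist_eq_norm]
  exact norm_le_norm_of_nonneg_of_le (sub_nonneg.2 hx.1) (sub_le_sub_right hx.2 a)

instance compactIccSpace [FiniteDimensional ℂ A] : CompactIccSpace A where
  isCompact_Icc := @fun _ _ => Metric.isCompact_of_isClosed_isBounded isClosed_Icc
    (Metric.isBounded_closedBall.subset (Icc_subset_closedBall _ _))

theorem exists_isStrictlyPositive_tendsto_subseq [FiniteDimensional ℂ A] {u : ℕ → A} {r s : ℝ}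
    (hr : 0 < r) (hu : ∀ k, u k ∈ Icc (algebraMap ℝ A r) (algebraMap ℝ A s)) :
    ∃ L, IsStrictlyPositive L ∧ ∃ φ : ℕ → ℕ, StrictMono φ ∧ Tendsto (u ∘ φ) atTop (𝓝 L) := by
  obtain ⟨L, hL, φ, hφ, hlim⟩ := isCompact_Icc.tendsto_subseq hu
  exact ⟨L, (isStrictlyPositive_algebraMap hr).of_le hL.1, φ, hφ, hlim⟩

end CStarAlgebra

namespace Matrix.IsHermitian

open scoped MatrixOrder

variable {n 𝕜 : Type*} [Fintype n] [DecidableEq n] [RCLike 𝕜] {A : Matrix n n 𝕜}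

theorem mem_Icc_algebraMap_of_eigenvalues (hA : A.IsHermitian) {r s : ℝ}
    (h : ∀ i, r ≤ hA.eigenvalues i ∧ hA.eigenvalues i ≤ s) :
    A ∈ Icc (algebraMap ℝ (Matrix n n 𝕜) r) (algebraMap ℝ (Matrix n n 𝕜) s) := by
  have hspectrum : ∀ x ∈ spectrum ℝ A, r ≤ x ∧ x ≤ s := by
    rw [hA.spectrum_real_eq_range_eigenvalues]
    rintro _ ⟨i, rfl⟩
    exact h i
  exact ⟨algebraMap_le_of_le_spectrum fun x hx => (hspectrum x hx).1,
    le_algebraMap_of_spectrum_le fun x hx => (hspectrum x hx).2⟩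

theorem inv_smul_mem_Icc_algebraMap (hA : A.IsHermitian) {c R : ℝ} (hc : 0 < c)
    (h : ∀ i, c / R ≤ hA.eigenvalues i ∧ hA.eigenvalues i ≤ c * R) :
    c⁻¹ • A ∈ Icc (algebraMap ℝ (Matrix n n 𝕜) R⁻¹) (algebraMap ℝ (Matrix n n 𝕜) R) := by
  have hscaled :=
    smul_mem_Icc_algebraMap (inv_nonneg.2 hc.le) (hA.mem_Icc_algebraMap_of_eigenvalues h)
  rwa [inv_mul_cancel_left₀ hc.ne', ← div_eq_inv_mul, div_div_cancel_left' hc.ne'] at hscaled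

end Matrix.IsHermitian

end

/-- A bounded sequence `(H_k)` of positive definite Hermitian
`(N+1)×(N+1)` complex matrices (with constants `γ_k`) has a subsequence such that
`γ_{n_k}⁻¹ • H_{n_k}` converges entrywise to a positive definite Hermitian matrix. -/
theorem bounded_sequence_has_convergent_normalized_subsequence
    (N : ℕ) (H : ℕ → Matrix (Fin (N + 1)) (Fin (N + 1)) ℂ)
    (hpd : ∀ k, (H k).PosDef)
    (R : ℝ) (hR : 1 < R) (γ : ℕ → ℝ) (hγ : ∀ k, 0 < γ k)
    (hbd : ∀ k i, γ k / R ≤ (hpd k).1.eigenvalues i ∧ (hpd k).1.eigenvalues i ≤ γ k * R) :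
    ∃ n : ℕ → ℕ, StrictMono n ∧
      ∃ L : Matrix (Fin (N + 1)) (Fin (N + 1)) ℂ, L.PosDef ∧
        Filter.Tendsto (fun k => (γ (n k))⁻¹ • H (n k)) Filter.atTop (nhds L) := by
  -- The L² operator norm makes matrices a C⋆-algebra without changing their entrywise topology.
  open scoped MatrixOrder Matrix.Norms.L2Operator in
  obtain ⟨L, hL, φ, hφ, hlim⟩ := CStarAlgebra.exists_isStrictlyPositive_tendsto_subseq
    (inv_pos.2 (zero_lt_one.trans hR)) fun k => (hpd k).1.inv_smul_mem_Icc_algebraMap (hγ k) (hbd k)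
  exact ⟨φ, hφ, L, Matrix.isStrictlyPositive_iff_posDef.1 hL, hlim⟩
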